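/- Vandermonde–Wronskian relation: let K be a division ring, S an endomorphism, D an S-derivation, a ∈ K, and u₁,…,uₙ nonzero elements of K. Then V(a^{u₁},…,a^{uₙ}) · diag(u₁,…,uₙ) = W(u₁,…,uₙ), where V is the generalized Vandermonde matrix with (i,j)-entry N_{i-1}(a^{u_j}) and W is the generalized Wronskian matrix with (i,j)-entry Tₐ^{i-1}(u_j). -/

import Mathlib

/-!
`Tₐ` obeys the Leibniz rule `Tₐ(xu) = S(x)Tₐ(u) + D(x)u`, which is also the recursion defining `N`.
Hence any `b` with `bu = Tₐ(u)` satisfies `Nᵢ(b)u = Tₐⁱ(u)` for all `i`, and `b = a^u` is such an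
element as soon as `u ≠ 0`. Column `j` of the matrix identity is the case `u = u_j`.
-/

/-- The `(S,D)`-conjugate `a^c := S(c)·a·c⁻¹ + D(c)·c⁻¹`. -/
def sdConj {K : Type*} [DivisionRing K] (S : K →+* K) (D : K →+ K) (a c : K) : K :=
  S c * a * c⁻¹ + D c * c⁻¹

/-- The pseudo-linear map `Tₐ(x) = S(x)a + D(x)`. -/
def sdT {K : Type*} [DivisionRing K] (S : K →+* K) (D : K →+ K) (a x : K) : K :=
  S x * a + D x

/-- `Nᵢ(x)`: `N₀(x) = 1`, `N_{i+1}(x) = S(Nᵢ(x))x + D(Nᵢ(x))`. -/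
def sdN {K : Type*} [DivisionRing K] (S : K →+* K) (D : K →+ K) (x : K) : ℕ → K
  | 0 => 1
  | i + 1 => S (sdN S D x i) * x + D (sdN S D x i)

section

variable {K : Type*} [DivisionRing K] (S : K →+* K) (D : K →+ K)

theorem sdT_mul (hD : ∀ a b : K, D (a * b) = S a * D b + D a * b) (a x y : K) :
    sdT S D a (x * y) = S x * sdT S D a y + D x * y := by
  simp only [sdT, map_mul, hD]
  noncomm_ring

theorem sdConj_mul_self (a : K) {u : K} (hu : u ≠ 0) : sdConj S D a u * u = sdT S D a u := by
  simp only [sdConj, sdT, add_mul, mul_assoc, inv_mul_cancel₀ hu, mul_one]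

theorem sdN_mul_eq_iterate_sdT (hD : ∀ a b : K, D (a * b) = S a * D b + D a * b)
    {a b u : K} (hbu : b * u = sdT S D a u) (i : ℕ) :
    sdN S D b i * u = (sdT S D a)^[i] u := by
  induction i with
  | zero => simp [sdN]
  | succ i ih =>
    calc sdN S D b (i + 1) * u = S (sdN S D b i) * (b * u) + D (sdN S D b i) * u := by
          rw [sdN, add_mul, mul_assoc]
      _ = sdT S D a (sdN S D b i * u) := by rw [hbu, sdT_mul S D hD]
      _ = (sdT S D a)^[i + 1] u := by rw [ih, Function.iterate_succ_apply']

end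

/-- Vandermonde–Wronskian relation:
`V(a^{u₁},…,a^{uₙ}) · diag(u₁,…,uₙ) = W(u₁,…,uₙ)`. -/
theorem vandermonde_mul_diag_eq_wronskian {K : Type*} [DivisionRing K]
    (S : K →+* K) (D : K →+ K)
    (hD : ∀ a b : K, D (a * b) = S a * D b + D a * b)
    (n : ℕ) (a : K) (u : Fin n → K) (hu : ∀ j, u j ≠ 0) :
    (Matrix.of fun i j : Fin n => sdN S D (sdConj S D a (u j)) (i : ℕ)) *
        Matrix.diagonal u =
      Matrix.of fun i j : Fin n => (sdT S D a)^[(i : ℕ)] (u j) := by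
  ext i j
  rw [Matrix.mul_diagonal]
  exact sdN_mul_eq_iterate_sdT S D hD (sdConj_mul_self S D a (hu j)) i
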